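/- arXiv:2605.02362 — 4 statements merged into one kernel-verified Lean document; each statement's English description precedes it below -/
import Mathlib

section
/- In the LTS lifted to sets of states (determinized powerset LTS), the non-blocking delay axiom can fail: there exist an asynchronous CCS process p and sets X such that X --τ--> X' --out(a)--> --in(a)--> {success} but no in(a)-then-out(a) path from X' reaches {success}. -/
/-- Asynchronous CCS processes: `0`, the success process `1`, input prefix
`a?.p`, output `a!.0`, `τ`-prefix, sum and parallel composition. -/
inductive AProc : Type where
  | nil
  | one
  | inp (a : ℕ) (p : AProc)
  | out (a : ℕ)
  | tauP (p : AProc)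
  | sum (p q : AProc)
  | par (p q : AProc)

/-- Labels of ACCS: input `a?`, output `a!`, and `τ`. -/
inductive ALab : Type where
  | inl (a : ℕ)
  | outl (a : ℕ)
  | tau

/-- The LTS of ACCS. -/
inductive astep : AProc → ALab → AProc → Prop where
  | inp {a p} : astep (.inp a p) (.inl a) p
  | out {a} : astep (.out a) (.outl a) .nil
  | tauP {p} : astep (.tauP p) .tau p
  | sumL {p q p' α} : astep p α p' → astep (.sum p q) α p'
  | sumR {p q q' α} : astep q α q' → astep (.sum p q) α q'
  | parL {p q p' α} : astep p α p' → astep (.par p q) α (.par p' q)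
  | parR {p q q' α} : astep q α q' → astep (.par p q) α (.par p q')
  | comL {p q p' q' a} : astep p (.outl a) p' → astep q (.inl a) q' →
      astep (.par p q) .tau (.par p' q')
  | comR {p q p' q' a} : astep p (.inl a) p' → astep q (.outl a) q' →
      astep (.par p q) .tau (.par p' q')

/-- Structural congruence of ACCS. -/
inductive acong : AProc → AProc → Prop where
  | refl (p) : acong p p
  | symm {p q} : acong p q → acong q p
  | trans {p q r} : acong p q → acong q r → acong p r
  | parNil {p} : acong (.par p .nil) p
  | parComm {p q} : acong (.par p q) (.par q p)
  | parAssoc {p q r} : acong (.par (.par p q) r) (.par p (.par q r))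
  | sumNil {p} : acong (.sum p .nil) p
  | sumComm {p q} : acong (.sum p q) (.sum q p)
  | sumAssoc {p q r} : acong (.sum (.sum p q) r) (.sum p (.sum q r))
  | ctxInp {a p p'} : acong p p' → acong (.inp a p) (.inp a p')
  | ctxTau {p p'} : acong p p' → acong (.tauP p) (.tauP p')
  | ctxSum {p p' q q'} : acong p p' → acong q q' → acong (.sum p q) (.sum p' q')
  | ctxPar {p p' q q'} : acong p p' → acong q q' → acong (.par p q) (.par p' q')

/-- The determinized powerset LTS on (nonempty) sets of processes. -/
def sstep (X : Set AProc) (α : ALab) (Y : Set AProc) : Prop :=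
  (Y = {q | ∃ p ∈ X, astep p α q}) ∧ Y.Nonempty

-- auxiliary section to be inserted above theorem
namespace NBAux

def ones : AProc → ℕ
  | .nil => 0
  | .one => 1
  | .inp _ p => ones p
  | .out _ => 0
  | .tauP p => ones p
  | .sum p q => ones p + ones q
  | .par p q => ones p + ones q

lemma acong_ones {p q : AProc} (h : acong p q) : ones p = ones q := by
  induction h <;> simp_all [ones] <;> omega

lemma not_acong_nil_one : ¬ acong .nil .one := by
  intro h; have := acong_ones h; simp [ones] at this

def pA : AProc := .inp 0 (.out 0)
def pB : AProc := .par (.out 0) (.inp 0 .one)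

lemma step2 : sstep {pA, pB} (.outl 0) {AProc.par .nil (.inp 0 .one)} := by
  constructor
  · ext q
    simp only [Set.mem_setOf_eq, Set.mem_insert_iff, Set.mem_singleton_iff]
    constructor
    · rintro rfl
      exact ⟨pB, Or.inr rfl, astep.parL astep.out⟩
    · rintro ⟨p, (rfl | rfl), h⟩
      · cases h
      · cases h with
        | parL h => cases h; rfl
        | parR h => cases h
  · exact ⟨_, rfl⟩

lemma step3 : sstep {AProc.par .nil (.inp 0 .one)} (.inl 0) {AProc.par .nil .one} := by
  constructor
  · ext q
    simp only [Set.mem_setOf_eq, Set.mem_singleton_iff]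
    constructor
    · rintro rfl
      exact ⟨_, rfl, astep.parR astep.inp⟩
    · rintro ⟨p, rfl, h⟩
      cases h with
      | parL h => cases h
      | parR h => cases h; rfl
  · exact ⟨_, rfl⟩

end NBAux


open NBAux in
/-- In the powerset LTS of ACCS the non-blocking delay axiom fails:
there are sets `X --τ--> X' --a!--> X₂ --a?--> X₃` with `X₃` consisting only
of successful processes, while no `a?`-then-`a!` path from `X'` reaches only
successful processes; consequently the powerset LTS of ACCS does not satisfy
non-blocking delay. -/
theorem powerset_accs_fails_nb_delay :
    (∃ (X X' : Set AProc) (a : ℕ),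
      sstep X .tau X' ∧
      (∃ X₂ X₃, sstep X' (.outl a) X₂ ∧ sstep X₂ (.inl a) X₃ ∧
        ∀ r ∈ X₃, acong r .one) ∧
      (∀ Y Z, sstep X' (.inl a) Y → sstep Y (.outl a) Z →
        ¬ ∀ r ∈ Z, acong r .one)) ∧
    ¬ (∀ (X X₂ X₃ : Set AProc) (a : ℕ) (α : ALab),
        sstep X (.outl a) X₂ → sstep X₂ α X₃ →
        ∃ X₄, sstep X α X₄ ∧ sstep X₄ (.outl a) X₃) := by
  have hstep0 : sstep {AProc.tauP pA, AProc.tauP pB} .tau {pA, pB} := by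
    constructor
    · ext q
      simp only [Set.mem_setOf_eq, Set.mem_insert_iff, Set.mem_singleton_iff]
      constructor
      · rintro (rfl | rfl)
        · exact ⟨_, Or.inl rfl, astep.tauP⟩
        · exact ⟨_, Or.inr rfl, astep.tauP⟩
      · rintro ⟨p, (rfl | rfl), h⟩
        · cases h; exact Or.inl rfl
        · cases h; exact Or.inr rfl
    · exact ⟨pA, Or.inl rfl⟩
  have hblock : ∀ Y Z, sstep {pA, pB} (.inl 0) Y → sstep Y (.outl 0) Z →
      ¬ ∀ r ∈ Z, acong r .one := by
    intro Y Z hY hZ hall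
    have houtY : AProc.out 0 ∈ Y := by
      rw [hY.1]; exact ⟨pA, Or.inl rfl, astep.inp⟩
    have hnilZ : AProc.nil ∈ Z := by
      rw [hZ.1]; exact ⟨_, houtY, astep.out⟩
    exact not_acong_nil_one (hall _ hnilZ)
  refine ⟨⟨{AProc.tauP pA, AProc.tauP pB}, {pA, pB}, 0, hstep0,
      ⟨_, _, step2, step3, ?_⟩, hblock⟩, ?_⟩
  · rintro r rfl
    exact acong.trans acong.parComm acong.parNil
  · intro h
    obtain ⟨X₄, h1, h2⟩ := h {pA, pB} _ _ 0 (.inl 0) step2 step3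
    have houtY : AProc.out 0 ∈ X₄ := by
      rw [h1.1]; exact ⟨pA, Or.inl rfl, astep.inp⟩
    have hnil : AProc.nil ∈ ({AProc.par .nil .one} : Set AProc) := by
      rw [h2.1]; exact ⟨_, houtY, astep.out⟩
    simp at hnil
end

section
/- In value-passing asynchronous CCS, outputs satisfy feedback: if p --a!v--> p' --a?v--> q then p --τ--> r for some r ≡ q. -/
/-- Value-passing CCS processes over names `Name` and values `Val`.
Input prefixes bind a value (represented functionally); recursion uses
de Bruijn process variables. -/
inductive Proc (Name Val : Type) : Type where
  | nil
  | one
  | inp (a : Name) (k : Val → Proc Name Val)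
  | out (a : Name) (v : Val) (p : Proc Name Val)
  | tauP (p : Proc Name Val)
  | sum (p q : Proc Name Val)
  | par (p q : Proc Name Val)
  | res (a : Name) (p : Proc Name Val)
  | cond (b : Bool) (p q : Proc Name Val)
  | var (n : ℕ)
  | fix (p : Proc Name Val)

namespace Proc

variable {Name Val : Type}

/-- Substitution of a process for a (de Bruijn) process variable. -/
def psub : Proc Name Val → ℕ → Proc Name Val → Proc Name Val
  | .nil, _, _ => .nil
  | .one, _, _ => .one
  | .inp a k, n, r => .inp a (fun v => psub (k v) n r)
  | .out a v p, n, r => .out a v (psub p n r)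
  | .tauP p, n, r => .tauP (psub p n r)
  | .sum p q, n, r => .sum (psub p n r) (psub q n r)
  | .par p q, n, r => .par (psub p n r) (psub q n r)
  | .res a p, n, r => .res a (psub p n r)
  | .cond b p q, n, r => .cond b (psub p n r) (psub q n r)
  | .var m, n, r => if m = n then r else .var m
  | .fix p, n, r => .fix (psub p (n + 1) r)

/-- Free names of a process. -/
def fn : Proc Name Val → Set Name
  | .nil => ∅
  | .one => ∅
  | .inp a k => insert a (⋃ v, fn (k v))
  | .out a v p => insert a (fn p)
  | .tauP p => fn p
  | .sum p q => fn p ∪ fn q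
  | .par p q => fn p ∪ fn q
  | .res a p => fn p \ {a}
  | .cond _ p q => fn p ∪ fn q
  | .var _ => ∅
  | .fix p => fn p

end Proc

/-- Labels of value-passing CCS: input `a?v`, output `a!v`, and `τ`. -/
inductive VLab (Name Val : Type) : Type where
  | inl (a : Name) (v : Val)
  | outl (a : Name) (v : Val)
  | tau

/-- The channel mentioned by a label, if any. -/
def VLab.chan {Name Val : Type} : VLab Name Val → Option Name
  | .inl a _ => some a
  | .outl a _ => some a
  | .tau => none

/-- The involutive duality on labels. -/
def VLab.co {Name Val : Type} : VLab Name Val → VLab Name Val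
  | .inl a v => .outl a v
  | .outl a v => .inl a v
  | .tau => .tau

/-- The early-style LTS of value-passing CCS. -/
inductive vstep {Name Val : Type} :
    Proc Name Val → VLab Name Val → Proc Name Val → Prop where
  | inp {a k v} : vstep (.inp a k) (.inl a v) (k v)
  | out {a v p} : vstep (.out a v p) (.outl a v) p
  | tauP {p} : vstep (.tauP p) .tau p
  | sumL {p q p' α} : vstep p α p' → vstep (.sum p q) α p'
  | sumR {p q q' α} : vstep q α q' → vstep (.sum p q) α q'
  | parL {p q p' α} : vstep p α p' → vstep (.par p q) α (.par p' q)
  | parR {p q q' α} : vstep q α q' → vstep (.par p q) α (.par p q')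
  | comL {p q p' q' a v} : vstep p (.outl a v) p' → vstep q (.inl a v) q' →
      vstep (.par p q) .tau (.par p' q')
  | comR {p q p' q' a v} : vstep p (.inl a v) p' → vstep q (.outl a v) q' →
      vstep (.par p q) .tau (.par p' q')
  | res {p p' a α} : vstep p α p' → α.chan ≠ some a →
      vstep (.res a p) α (.res a p')
  | condT {p q p' α} : vstep p α p' → vstep (.cond true p q) α p'
  | condF {p q q' α} : vstep q α q' → vstep (.cond false p q) α q'
  | unf {p} : vstep (.fix p) .tau (p.psub 0 (.fix p))

/-- Structural congruence of value-passing CCS. -/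
inductive vcong {Name Val : Type} : Proc Name Val → Proc Name Val → Prop where
  | refl (p) : vcong p p
  | symm {p q} : vcong p q → vcong q p
  | trans {p q r} : vcong p q → vcong q r → vcong p r
  | sumNil {p} : vcong (.sum p .nil) p
  | sumComm {p q} : vcong (.sum p q) (.sum q p)
  | sumAssoc {p q r} : vcong (.sum (.sum p q) r) (.sum p (.sum q r))
  | parNil {p} : vcong (.par p .nil) p
  | parComm {p q} : vcong (.par p q) (.par q p)
  | parAssoc {p q r} : vcong (.par (.par p q) r) (.par p (.par q r))
  | resNil {a} : vcong (.res a .nil) .nil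
  | resSwap {a b p} : vcong (.res a (.res b p)) (.res b (.res a p))
  | resScope {a p q} : a ∉ p.fn → vcong (.res a (.par p q)) (.par p (.res a q))
  | condT {p q} : vcong (.cond true p q) p
  | condF {p q} : vcong (.cond false p q) q
  | ctxInp {a k k'} : (∀ v, vcong (k v) (k' v)) → vcong (.inp a k) (.inp a k')
  | ctxOut {a v p p'} : vcong p p' → vcong (.out a v p) (.out a v p')
  | ctxTau {p p'} : vcong p p' → vcong (.tauP p) (.tauP p')
  | ctxSum {p p' q q'} : vcong p p' → vcong q q' → vcong (.sum p q) (.sum p' q')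
  | ctxPar {p p' q q'} : vcong p p' → vcong q q' → vcong (.par p q) (.par p' q')
  | ctxRes {a p p'} : vcong p p' → vcong (.res a p) (.res a p')
  | ctxCond {b p p' q q'} : vcong p p' → vcong q q' →
      vcong (.cond b p q) (.cond b p' q')
  | ctxFix {p pq} : vcong p pq → vcong (.fix p) (.fix pq)

/-- Asynchronous processes (VACCS): every output prefix has continuation `0`,
and no summand of a sum is an output prefix. -/
inductive Async {Name Val : Type} : Proc Name Val → Prop where
  | nil : Async .nil
  | one : Async .one
  | inp {a k} : (∀ v, Async (k v)) → Async (.inp a k)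
  | out {a v} : Async (.out a v .nil)
  | tauP {p} : Async p → Async (.tauP p)
  | sum {p q} : Async p → Async q →
      (∀ a v r, p ≠ .out a v r) → (∀ a v r, q ≠ .out a v r) →
      Async (.sum p q)
  | par {p q} : Async p → Async q → Async (.par p q)
  | res {a p} : Async p → Async (.res a p)
  | cond {b p q} : Async p → Async q → Async (.cond b p q)
  | var {n} : Async (.var n)
  | fix {p} : Async p → Async (.fix p)

/-- In VACCS outputs satisfy feedback: if `p --a!v--> p' --a?v--> q` then
`p --τ--> r` for some `r ≡ q`. -/
theorem vaccs_output_feedback {Name Val : Type}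
    (p p' q : Proc Name Val) (a : Name) (v : Val) (hA : Async p)
    (h₁ : vstep p (.outl a v) p') (h₂ : vstep p' (.inl a v) q) :
    ∃ r, vstep p .tau r ∧ vcong r q := by
  obtain ⟨α, hα⟩ : ∃ α, α = VLab.outl (Name := Name) (Val := Val) a v := ⟨_, rfl⟩
  rw [← hα] at h₁
  induction h₁ generalizing q with
  | inp => cases hα
  | out =>
    cases hα
    cases hA
    cases h₂
  | tauP => cases hα
  | sumL h ih =>
    cases hA with
    | sum hp hq _ _ =>
      obtain ⟨r, hr, hc⟩ := ih _ hp h₂ hα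
      exact ⟨r, .sumL hr, hc⟩
  | sumR h ih =>
    cases hA with
    | sum hp hq _ _ =>
      obtain ⟨r, hr, hc⟩ := ih _ hq h₂ hα
      exact ⟨r, .sumR hr, hc⟩
  | parL h ih =>
    cases hα
    cases hA with
    | par hp hq =>
      cases h₂ with
      | parL h' =>
        obtain ⟨r, hr, hc⟩ := ih _ hp h' rfl
        exact ⟨_, .parL hr, .ctxPar hc (.refl _)⟩
      | parR h' =>
        exact ⟨_, .comL h h', .refl _⟩
  | parR h ih =>
    cases hα
    cases hA with
    | par hp hq =>
      cases h₂ with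
      | parL h' =>
        exact ⟨_, .comR h' h, .refl _⟩
      | parR h' =>
        obtain ⟨r, hr, hc⟩ := ih _ hq h' rfl
        exact ⟨_, .parR hr, .ctxPar (.refl _) hc⟩
  | comL => cases hα
  | comR => cases hα
  | res h hne ih =>
    cases hα
    cases hA with
    | res hp =>
      cases h₂ with
      | res h' hne' =>
        obtain ⟨r, hr, hc⟩ := ih _ hp h' rfl
        exact ⟨_, .res hr (by simp [VLab.chan]), .ctxRes hc⟩
  | condT h ih =>
    cases hA with
    | cond hp hq =>
      obtain ⟨r, hr, hc⟩ := ih _ hp h₂ hα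
      exact ⟨r, .condT hr, hc⟩
  | condF h ih =>
    cases hA with
    | cond hp hq =>
      obtain ⟨r, hr, hc⟩ := ih _ hq h₂ hα
      exact ⟨r, .condF hr, hc⟩
  | unf => cases hα
end

section
/- Zipping lemma for value-passing CCS: for any visible action μ, if p --μ--> p' and q --co-μ--> q', then p∥q --τ--> p'∥q' or p∥q ≡ p'∥q'; and for any trace s of visible actions, if p ⇒s⇒ p' and q ⇒co-s⇒ q' then p∥q ⇒ε⇒ r for some r ≡ p'∥q'. -/
/-- Weak transitions along a trace, interleaving `τ`-steps with the visible
actions of the trace. -/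
inductive wtr {Name Val : Type} :
    Proc Name Val → List (VLab Name Val) → Proc Name Val → Prop where
  | refl (p) : wtr p [] p
  | tau {p q r s} : vstep p .tau q → wtr q s r → wtr p s r
  | vis {p q r s μ} : μ ≠ VLab.tau → vstep p μ q → wtr q s r →
      wtr p (μ :: s) r

private lemma wtr_nil_parL {Name Val : Type} {p p' q : Proc Name Val}
    (h : wtr p [] p') : wtr (.par p q) [] (.par p' q) := by
  generalize hs : ([] : List (VLab Name Val)) = s at h
  induction h with
  | refl => exact wtr.refl _
  | tau h1 _ ih => exact wtr.tau (vstep.parL h1) (ih hs)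
  | vis => simp at hs

private lemma wtr_nil_parR {Name Val : Type} {p q q' : Proc Name Val}
    (h : wtr q [] q') : wtr (.par p q) [] (.par p q') := by
  generalize hs : ([] : List (VLab Name Val)) = s at h
  induction h with
  | refl => exact wtr.refl _
  | tau h1 _ ih => exact wtr.tau (vstep.parR h1) (ih hs)
  | vis => simp at hs

private lemma wtr_nil_trans {Name Val : Type} {p q r : Proc Name Val}
    (h1 : wtr p [] q) (h2 : wtr q [] r) : wtr p [] r := by
  generalize hs : ([] : List (VLab Name Val)) = s at h1
  induction h1 with
  | refl => exact h2
  | tau ha _ ih => exact wtr.tau ha (ih h2 hs)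
  | vis => simp at hs

private lemma wtr_split {Name Val : Type} {p p' : Proc Name Val}
    {μ : VLab Name Val} {s : List (VLab Name Val)}
    (h : wtr p (μ :: s) p') :
    ∃ q1 q2, wtr p [] q1 ∧ vstep q1 μ q2 ∧ wtr q2 s p' := by
  generalize hs : μ :: s = t at h
  induction h with
  | refl => simp at hs
  | tau h1 _ ih =>
      obtain ⟨q1, q2, ha, hb, hc⟩ := ih hs
      exact ⟨q1, q2, wtr.tau h1 ha, hb, hc⟩
  | vis hne h1 h2 _ =>
      cases hs
      exact ⟨_, _, wtr.refl _, h1, h2⟩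

/-- Zipping lemma for VCCS: (1) if `p --μ--> p'` and `q --co-μ--> q'` for a
visible `μ`, then `p∥q --τ--> p'∥q'` or `p∥q ≡ p'∥q'`; (2) if `p ⇒s⇒ p'` and
`q ⇒co-s⇒ q'` for a trace `s` of visible actions, then `p∥q ⇒ε⇒ r` for some
`r ≡ p'∥q'`. -/
theorem vccs_zipping {Name Val : Type} :
    (∀ (μ : VLab Name Val) (p p' q q' : Proc Name Val), μ ≠ VLab.tau →
      vstep p μ p' → vstep q μ.co q' →
      vstep (.par p q) .tau (.par p' q') ∨
        vcong (.par p q) (.par p' q')) ∧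
    (∀ (s : List (VLab Name Val)) (p p' q q' : Proc Name Val),
      (∀ μ ∈ s, μ ≠ VLab.tau) →
      wtr p s p' → wtr q (s.map VLab.co) q' →
      ∃ r, wtr (.par p q) [] r ∧ vcong r (.par p' q')) := by
  have part1 : ∀ (μ : VLab Name Val) (p p' q q' : Proc Name Val), μ ≠ VLab.tau →
      vstep p μ p' → vstep q μ.co q' →
      vstep (.par p q) .tau (.par p' q') ∨ vcong (.par p q) (.par p' q') := by
    intro μ p p' q q' hne hp hq
    cases μ with
    | inl a v => exact Or.inl (vstep.comR hp hq)
    | outl a v => exact Or.inl (vstep.comL hp hq)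
    | tau => exact absurd rfl hne
  refine ⟨part1, ?_⟩
  intro s p p' q q' hvis hp hq
  induction hp generalizing q with
  | refl p =>
      simp only [List.map_nil] at hq
      exact ⟨.par p q', wtr_nil_parR hq, vcong.refl _⟩
  | tau h1 _ ih =>
      obtain ⟨r, hr1, hr2⟩ := ih q hvis hq
      exact ⟨r, wtr.tau (vstep.parL h1) hr1, hr2⟩
  | @vis p0 p1 p2 s' μ hne h1 h2 ih =>
      simp only [List.map_cons] at hq
      obtain ⟨q1, q2, ha, hb, hc⟩ := wtr_split hq
      have hstep : vstep (.par p0 q1) .tau (.par p1 q2) := by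
        cases μ with
        | inl a v => exact vstep.comR h1 hb
        | outl a v => exact vstep.comL h1 hb
        | tau => exact absurd rfl hne
      obtain ⟨r, hr1, hr2⟩ := ih q2 (fun ν hν => hvis ν (List.mem_cons_of_mem _ hν)) hc
      exact ⟨r, wtr_nil_trans (wtr_nil_parR ha) (wtr.tau hstep hr1), hr2⟩
end

section
/- In value-passing asynchronous CCS, weak output swap holds: if p ⇒a!v⇒·⇒α⇒ q (p weakly performs output a!v followed by α reaching q), then p can weakly perform α first and then a!v, reaching some q' ≡ q. -/
/-- Sequences of `τ`-transitions. -/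
def tausP {Name Val : Type} : Proc Name Val → Proc Name Val → Prop :=
  Relation.ReflTransGen (fun p q => vstep p .tau q)

/-- The weak transition `p ⇒α⇒ q`: `τ*` when `α = τ`, and `τ* α τ*`
otherwise. -/
def weak {Name Val : Type} : Proc Name Val → VLab Name Val → Proc Name Val → Prop
  | p, .tau, q => tausP p q
  | p, μ, q => ∃ p₁ p₂, tausP p p₁ ∧ vstep p₁ μ p₂ ∧ tausP p₂ q

section Aux
variable {Name Val : Type}

lemma psub_not_out {p q : Proc Name Val} {n : ℕ}
    (hp : ∀ a v s, p ≠ .out a v s) (hq : ∀ a v s, q ≠ .out a v s) :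
    ∀ a v s, Proc.psub p n q ≠ .out a v s := by
  cases p <;> simp [Proc.psub] at * <;> try exact fun a v s h => by cases h
  case var m =>
    intro a v s
    by_cases h : m = n
    · simp [h]; exact hq a v s
    · simp [h]

lemma async_psub {p : Proc Name Val} (hp : Async p) :
    ∀ {n : ℕ} {q : Proc Name Val}, Async q → (∀ a v s, q ≠ .out a v s) →
      Async (Proc.psub p n q) := by
  induction hp with
  | nil => intro n q hq hno; exact Async.nil
  | one => intro n q hq hno; exact Async.one
  | inp hk ih => intro n q hq hno; exact Async.inp (fun v => ih v hq hno)
  | out => intro n q hq hno; exact Async.out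
  | tauP hp ih => intro n q hq hno; exact Async.tauP (ih hq hno)
  | sum hp hq' hnp hnq ih1 ih2 =>
      intro n q hq hno
      exact Async.sum (ih1 hq hno) (ih2 hq hno)
        (psub_not_out hnp hno) (psub_not_out hnq hno)
  | par hp hq' ih1 ih2 => intro n q hq hno; exact Async.par (ih1 hq hno) (ih2 hq hno)
  | res hp ih => intro n q hq hno; exact Async.res (ih hq hno)
  | cond hp hq' ih1 ih2 => intro n q hq hno; exact Async.cond (ih1 hq hno) (ih2 hq hno)
  | var =>
      intro n q hq hno
      simp only [Proc.psub]
      split <;> [exact hq; exact Async.var]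
  | fix hp ih => intro n q hq hno; exact Async.fix (ih hq hno)

lemma async_step {p q : Proc Name Val} {α : VLab Name Val}
    (hA : Async p) (h : vstep p α q) : Async q := by
  induction h with
  | inp => cases hA with | inp hk => exact hk _
  | out => cases hA; exact Async.nil
  | tauP => cases hA with | tauP h => exact h
  | sumL h ih => cases hA with | sum h1 h2 _ _ => exact ih h1
  | sumR h ih => cases hA with | sum h1 h2 _ _ => exact ih h2
  | parL h ih => cases hA with | par h1 h2 => exact Async.par (ih h1) h2
  | parR h ih => cases hA with | par h1 h2 => exact Async.par h1 (ih h2)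
  | comL h1 h2 ih1 ih2 => cases hA with | par a1 a2 => exact Async.par (ih1 a1) (ih2 a2)
  | comR h1 h2 ih1 ih2 => cases hA with | par a1 a2 => exact Async.par (ih1 a1) (ih2 a2)
  | res h _ ih => cases hA with | res h1 => exact Async.res (ih h1)
  | condT h ih => cases hA with | cond h1 h2 => exact ih h1
  | condF h ih => cases hA with | cond h1 h2 => exact ih h2
  | unf =>
      cases hA with
      | fix h1 =>
          exact async_psub h1 (Async.fix h1) (fun a v s h => by cases h)

lemma async_taus {p q : Proc Name Val} (hA : Async p) (h : tausP p q) : Async q := by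
  induction h with
  | refl => exact hA
  | tail _ hstep ih => exact async_step ih hstep

lemma swap_step {a : Name} {v : Val} {p r : Proc Name Val}
    (hA : Async p) (h₁ : vstep p (.outl a v) r) :
    ∀ {α : VLab Name Val} {q : Proc Name Val}, vstep r α q →
      ∃ r', vstep p α r' ∧ vstep r' (.outl a v) q := by
  generalize hμ : (VLab.outl a v : VLab Name Val) = μ at h₁
  induction h₁ with
  | inp => cases hμ
  | out =>
      cases hμ
      cases hA
      intro α q h₂
      cases h₂
  | tauP => cases hμ
  | sumL h ih =>
      cases hA with | sum a1 a2 _ _ =>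
      intro α q h₂
      obtain ⟨r', s1, s2⟩ := ih a1 hμ h₂
      exact ⟨r', .sumL s1, s2⟩
  | sumR h ih =>
      cases hA with | sum a1 a2 _ _ =>
      intro α q h₂
      obtain ⟨r', s1, s2⟩ := ih a2 hμ h₂
      exact ⟨r', .sumR s1, s2⟩
  | parL h ih =>
      cases hA with | par a1 a2 =>
      subst hμ
      intro α q h₂
      cases h₂ with
      | parL h' =>
          obtain ⟨r', s1, s2⟩ := ih a1 rfl h'
          exact ⟨_, .parL s1, .parL s2⟩
      | parR h' => exact ⟨_, .parR h', .parL h⟩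
      | comL hout hin =>
          obtain ⟨r', s1, s2⟩ := ih a1 rfl hout
          exact ⟨_, .comL s1 hin, .parL s2⟩
      | comR hin hout =>
          obtain ⟨r', s1, s2⟩ := ih a1 rfl hin
          exact ⟨_, .comR s1 hout, .parL s2⟩
  | parR h ih =>
      cases hA with | par a1 a2 =>
      subst hμ
      intro α q h₂
      cases h₂ with
      | parL h' => exact ⟨_, .parL h', .parR h⟩
      | parR h' =>
          obtain ⟨r', s1, s2⟩ := ih a2 rfl h'
          exact ⟨_, .parR s1, .parR s2⟩
      | comL hout hin =>
          obtain ⟨r', s1, s2⟩ := ih a2 rfl hin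
          exact ⟨_, .comL hout s1, .parR s2⟩
      | comR hin hout =>
          obtain ⟨r', s1, s2⟩ := ih a2 rfl hout
          exact ⟨_, .comR hin s1, .parR s2⟩
  | comL => cases hμ
  | comR => cases hμ
  | res h hch ih =>
      cases hA with | res a1 =>
      intro α q h₂
      cases h₂ with
      | res h' hch' =>
          obtain ⟨r', s1, s2⟩ := ih a1 hμ h'
          exact ⟨_, .res s1 hch', .res s2 (hμ ▸ hch)⟩
  | condT h ih =>
      cases hA with | cond a1 a2 =>
      intro α q h₂
      obtain ⟨r', s1, s2⟩ := ih a1 hμ h₂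
      exact ⟨r', .condT s1, s2⟩
  | condF h ih =>
      cases hA with | cond a1 a2 =>
      intro α q h₂
      obtain ⟨r', s1, s2⟩ := ih a2 hμ h₂
      exact ⟨r', .condF s1, s2⟩
  | unf => cases hμ

lemma swap_taus {a : Name} {v : Val} {r z : Proc Name Val}
    (h : tausP r z) :
    ∀ {p : Proc Name Val}, Async p → vstep p (.outl a v) r →
      ∃ r', tausP p r' ∧ vstep r' (.outl a v) z := by
  induction h using Relation.ReflTransGen.head_induction_on with
  | refl => exact fun hA hs => ⟨_, Relation.ReflTransGen.refl, hs⟩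
  | head hstep _ ih =>
      intro p hA hs
      obtain ⟨x, s1, s2⟩ := swap_step hA hs hstep
      obtain ⟨r', t1, t2⟩ := ih (async_step hA s1) s2
      exact ⟨r', Relation.ReflTransGen.head s1 t1, t2⟩

end Aux

/-- Weak output swap in VACCS: if `p ⇒a!v⇒ r ⇒α⇒ q` then `p` can weakly
perform `α` first and then `a!v`, reaching some `q' ≡ q`. -/
theorem vaccs_weak_output_swap {Name Val : Type}
    (p r q : Proc Name Val) (a : Name) (v : Val) (α : VLab Name Val)
    (hA : Async p)
    (h₁ : weak p (.outl a v) r) (h₂ : weak r α q) :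
    ∃ r' q', weak p α r' ∧ weak r' (.outl a v) q' ∧ vcong q' q := by
  obtain ⟨p₁, p₂, t1, st, t2⟩ := h₁
  cases α with
  | tau =>
      exact ⟨p, q, Relation.ReflTransGen.refl,
        ⟨p₁, p₂, t1, st, t2.trans h₂⟩, vcong.refl q⟩
  | inl b w =>
      obtain ⟨s₁, s₂, u1, ust, u2⟩ := h₂
      have hA1 : Async p₁ := async_taus hA t1
      obtain ⟨u, v1, v2⟩ := swap_taus (t2.trans u1) hA1 st
      obtain ⟨w', w1, w2⟩ := swap_step (async_taus hA1 v1) v2 ust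
      exact ⟨w', q, ⟨u, w', t1.trans v1, w1, Relation.ReflTransGen.refl⟩,
        ⟨w', s₂, Relation.ReflTransGen.refl, w2, u2⟩, vcong.refl q⟩
  | outl b w =>
      obtain ⟨s₁, s₂, u1, ust, u2⟩ := h₂
      have hA1 : Async p₁ := async_taus hA t1
      obtain ⟨u, v1, v2⟩ := swap_taus (t2.trans u1) hA1 st
      obtain ⟨w', w1, w2⟩ := swap_step (async_taus hA1 v1) v2 ust
      exact ⟨w', q, ⟨u, w', t1.trans v1, w1, Relation.ReflTransGen.refl⟩,
        ⟨w', s₂, Relation.ReflTransGen.refl, w2, u2⟩, vcong.refl q⟩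
end
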